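/- (Fernández–Puerto characterization) x* ∈ X_m is a Pareto-optimal security strategy with security level vector v* if and only if (v*, x*) is a Pareto-efficient solution of the multiobjective linear program: minimize (v_1,…,v_k) subject to xᵀA(ℓ) ≤ v_ℓ·(1,…,1) for all ℓ, Σ_i x_i = 1, x ≥ 0. -/
import Mathlib


open Matrix BigOperators

/-- Security level vector of `x` (maximum entry of `xᵀA(ℓ)` in each criterion). -/
noncomputable def secVec {k m : ℕ} {n : Fin k → ℕ}
    (A : ∀ ℓ, Matrix (Fin m) (Fin (n ℓ)) ℝ) (x : Fin m → ℝ) : Fin k → ℝ :=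
  fun ℓ => ⨆ j, (x ᵥ* A ℓ) j

/-- `x*` is a Pareto-optimal security strategy. -/
noncomputable def IsPOSS {k m : ℕ} {n : Fin k → ℕ}
    (A : ∀ ℓ, Matrix (Fin m) (Fin (n ℓ)) ℝ) (xstar : Fin m → ℝ) : Prop :=
  xstar ∈ stdSimplex ℝ (Fin m) ∧
    ¬ ∃ x ∈ stdSimplex ℝ (Fin m), secVec A x ≤ secVec A xstar ∧ secVec A x ≠ secVec A xstar

/-- Feasibility of `(v, x)` in the Fernández–Puerto multiobjective linear program. -/
def Feasible {k m : ℕ} {n : Fin k → ℕ}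
    (A : ∀ ℓ, Matrix (Fin m) (Fin (n ℓ)) ℝ) (v : Fin k → ℝ) (x : Fin m → ℝ) : Prop :=
  x ∈ stdSimplex ℝ (Fin m) ∧ ∀ ℓ j, (x ᵥ* A ℓ) j ≤ v ℓ

/-- `(v*, x*)` is a Pareto-efficient solution of the multiobjective linear program. -/
def Efficient {k m : ℕ} {n : Fin k → ℕ}
    (A : ∀ ℓ, Matrix (Fin m) (Fin (n ℓ)) ℝ) (v : Fin k → ℝ) (x : Fin m → ℝ) : Prop :=
  Feasible A v x ∧ ∀ v' x', Feasible A v' x' → v' ≤ v → v' = v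

lemma secVec_le_iff {k m : ℕ} {n : Fin k → ℕ} (hn : ∀ ℓ, 0 < n ℓ)
    (A : ∀ ℓ, Matrix (Fin m) (Fin (n ℓ)) ℝ) (x : Fin m → ℝ) (v : Fin k → ℝ) :
    (∀ ℓ j, (x ᵥ* A ℓ) j ≤ v ℓ) ↔ secVec A x ≤ v := by
  constructor
  · intro h ℓ
    haveI : Nonempty (Fin (n ℓ)) := Fin.pos_iff_nonempty.mp (hn ℓ)
    exact ciSup_le (h ℓ)
  · intro h ℓ j
    exact le_trans (le_ciSup (Set.Finite.bddAbove (Set.finite_range _)) j) (h ℓ)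

/-- the Fernández–Puerto characterization of POSS and their
security level vectors via a multiobjective linear program. -/
theorem fernandez_puerto (k m : ℕ) (hm : 0 < m) (hk : 0 < k)
    (n : Fin k → ℕ) (hn : ∀ ℓ, 0 < n ℓ)
    (A : ∀ ℓ, Matrix (Fin m) (Fin (n ℓ)) ℝ)
    (xstar : Fin m → ℝ) (vstar : Fin k → ℝ) :
    (xstar ∈ stdSimplex ℝ (Fin m) ∧ IsPOSS A xstar ∧ vstar = secVec A xstar) ↔
      Efficient A vstar xstar := by
  constructor
  · rintro ⟨hx, ⟨_, hposs⟩, hv⟩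
    have hfeas : Feasible A vstar xstar :=
      ⟨hx, (secVec_le_iff hn A xstar vstar).mpr (le_of_eq hv.symm)⟩
    refine ⟨hfeas, fun v' x' ⟨hx', hle'⟩ hvle => ?_⟩
    have hsec' : secVec A x' ≤ v' := (secVec_le_iff hn A x' v').mp hle'
    have h1 : secVec A x' ≤ secVec A xstar := le_trans hsec' (hv ▸ hvle)
    have h2 : secVec A x' = secVec A xstar := by
      by_contra hne
      exact hposs ⟨x', hx', h1, hne⟩
    exact le_antisymm hvle (hv ▸ h2 ▸ hsec')
  · rintro ⟨⟨hx, hle⟩, heff⟩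
    have hsec : secVec A xstar ≤ vstar := (secVec_le_iff hn A xstar vstar).mp hle
    have hveq : secVec A xstar = vstar :=
      heff (secVec A xstar) xstar ⟨hx, (secVec_le_iff hn A xstar _).mpr le_rfl⟩ hsec
    refine ⟨hx, ⟨hx, ?_⟩, hveq.symm⟩
    rintro ⟨x, hx', hle', hne⟩
    exact hne (hveq ▸ heff (secVec A x) x ⟨hx', (secVec_le_iff hn A x _).mpr le_rfl⟩
      (hveq ▸ hle'))
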